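/- Similarity Relation (special case): let α be a real number with 0 < α < π/2, and set M = (0,1), N = (0,−1), Q = (cot α, 0), R = (cot 2α, 0) in ℝ². Let S be the circumcenter of the (non-collinear) triple M, Q, R, and let λ = (cot α − cot 2α)/2. Then λ > 0, and the triangle QRS is similar to the triangle NMQ with constant of proportionality λ: dist(Q,R) = λ · dist(N,M), dist(S,Q) = λ · dist(Q,N), and dist(S,R) = λ · dist(Q,M). Moreover the bases are perpendicular: the vector M − N is perpendicular to the vector R − Q. -/

import Mathlib

/-!
Write `q = cot α`. The double-angle formula gives `cot 2α = (q² - 1) / (2q)`, hence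
`λ = (q² + 1) / (4q) > 0`. The circumcentre lies above the midpoint of the chord `QR`,
at `S = (q - λ, (q² + 1) / 4)`. Then `R - Q = λ (-2, 0)`, `S - Q = λ (-1, q)` and
`S - R = λ (1, q)` are `M - N = (0, 2)`, `Q - N = (q, 1)` and `Q - M = (q, -1)` turned
through a right angle and scaled by `λ`.
-/

open Real

noncomputable def pt (x y : ℝ) : EuclideanSpace ℝ (Fin 2) := WithLp.toLp 2 ![x, y]

/- Both sides are junk `0` when `sin x = 0` or `cos x = 0`, so no side condition is needed. -/
theorem Real.cot_two_mul (x : ℝ) : cot (2 * x) = (cot x ^ 2 - 1) / (2 * cot x) := by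
  rw [cot_eq_cos_div_sin, cot_eq_cos_div_sin, cos_two_mul, sin_two_mul]
  rcases eq_or_ne (sin x) 0 with hs | hs
  · simp [hs]
  rcases eq_or_ne (cos x) 0 with hc | hc
  · simp [hc]
  field_simp
  linear_combination sin_sq_add_cos_sq x

theorem Real.cot_pos_of_pos_of_lt_pi_div_two {x : ℝ} (h0 : 0 < x) (h1 : x < π / 2) :
    0 < cot x := by
  rw [cot_eq_cos_div_sin]
  exact div_pos (cos_pos_of_mem_Ioo ⟨by linarith, h1⟩)
    (sin_pos_of_pos_of_lt_pi h0 (by linarith [pi_pos]))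

theorem exists_eq_pt (S : EuclideanSpace ℝ (Fin 2)) : ∃ a b, S = pt a b :=
  ⟨S 0, S 1, by ext i; fin_cases i <;> rfl⟩

theorem pt_sub_pt (x y x' y' : ℝ) : pt x y - pt x' y' = pt (x - x') (y - y') := by
  ext i; fin_cases i <;> simp [pt]

theorem inner_pt_pt (x y x' y' : ℝ) : inner ℝ (pt x y) (pt x' y') = x * x' + y * y' := by
  simp [pt, PiLp.inner_apply, Fin.sum_univ_two, mul_comm]

theorem dist_pt_pt (x y x' y' : ℝ) :
    dist (pt x y) (pt x' y') = √((x - x') ^ 2 + (y - y') ^ 2) := by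
  simp [pt, EuclideanSpace.dist_eq, Fin.sum_univ_two, Real.dist_eq, sq_abs]

theorem dist_pt_pt_eq_dist_pt_pt_iff {x y u v u' v' : ℝ} :
    dist (pt x y) (pt u v) = dist (pt x y) (pt u' v') ↔
      (x - u) ^ 2 + (y - v) ^ 2 = (x - u') ^ 2 + (y - v') ^ 2 := by
  rw [dist_pt_pt, dist_pt_pt, Real.sqrt_inj (by positivity) (by positivity)]

theorem dist_pt_pt_eq_mul {l x y x' y' u v u' v' : ℝ} (hl : 0 ≤ l)
    (h : (x - x') ^ 2 + (y - y') ^ 2 = l ^ 2 * ((u - u') ^ 2 + (v - v') ^ 2)) :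
    dist (pt x y) (pt x' y') = l * dist (pt u v) (pt u' v') := by
  rw [dist_pt_pt, dist_pt_pt, h, Real.sqrt_mul (sq_nonneg l), Real.sqrt_sq hl]

theorem eq_circumcenter_of_dist_eq {q r a b : ℝ} (hqr : q ≠ r)
    (hQ : dist (pt a b) (pt 0 1) = dist (pt a b) (pt q 0))
    (hR : dist (pt a b) (pt 0 1) = dist (pt a b) (pt r 0)) :
    a = (q + r) / 2 ∧ b = (1 + q * r) / 2 := by
  rw [dist_pt_pt_eq_dist_pt_pt_iff] at hQ hR
  have ha : a = (q + r) / 2 := by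
    have h : (r - q) * (2 * a - (q + r)) = 0 := by linear_combination hR - hQ
    have := (mul_eq_zero.1 h).resolve_left (sub_ne_zero.2 hqr.symm)
    linarith
  refine ⟨ha, ?_⟩
  subst ha
  linear_combination -hQ / 2

theorem similar_triangles_of_circumcenter {q : ℝ} (hq : 0 < q)
    (M N Q R S : EuclideanSpace ℝ (Fin 2))
    (hM : M = pt 0 1) (hN : N = pt 0 (-1))
    (hQ : Q = pt q 0) (hR : R = pt ((q ^ 2 - 1) / (2 * q)) 0)
    (hS1 : dist S M = dist S Q) (hS2 : dist S M = dist S R) :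
    0 < (q - (q ^ 2 - 1) / (2 * q)) / 2 ∧
    dist Q R = (q - (q ^ 2 - 1) / (2 * q)) / 2 * dist N M ∧
    dist S Q = (q - (q ^ 2 - 1) / (2 * q)) / 2 * dist Q N ∧
    dist S R = (q - (q ^ 2 - 1) / (2 * q)) / 2 * dist Q M ∧
    (inner ℝ (M - N) (R - Q) : ℝ) = 0 := by
  subst hM hN hQ hR
  obtain ⟨a, b, rfl⟩ := exists_eq_pt S
  have hl : (q - (q ^ 2 - 1) / (2 * q)) / 2 = (q ^ 2 + 1) / (4 * q) := by
    field_simp; ring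
  have hl_pos : 0 < (q ^ 2 + 1) / (4 * q) := by positivity
  obtain ⟨rfl, rfl⟩ := eq_circumcenter_of_dist_eq (by linarith : q ≠ _) hS1 hS2
  rw [hl]
  refine ⟨hl_pos, ?_, ?_, ?_, ?_⟩
  iterate 3 exact dist_pt_pt_eq_mul hl_pos.le (by field_simp; ring)
  · simp [pt_sub_pt, inner_pt_pt]

theorem similarity_relation_special_case (α : ℝ) (h0 : 0 < α) (h1 : α < π / 2)
    (M N Q R S : EuclideanSpace ℝ (Fin 2))
    (hM : M = pt 0 1) (hN : N = pt 0 (-1))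
    (hQ : Q = pt (Real.cot α) 0) (hR : R = pt (Real.cot (2 * α)) 0)
    (hS1 : dist S M = dist S Q) (hS2 : dist S M = dist S R) :
    0 < (Real.cot α - Real.cot (2 * α)) / 2 ∧
    dist Q R = (Real.cot α - Real.cot (2 * α)) / 2 * dist N M ∧
    dist S Q = (Real.cot α - Real.cot (2 * α)) / 2 * dist Q N ∧
    dist S R = (Real.cot α - Real.cot (2 * α)) / 2 * dist Q M ∧
    (inner ℝ (M - N) (R - Q) : ℝ) = 0 := by
  rw [Real.cot_two_mul] at hR ⊢
  exact similar_triangles_of_circumcenter (Real.cot_pos_of_pos_of_lt_pi_div_two h0 h1)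
    M N Q R S hM hN hQ hR hS1 hS2
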